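/- Let k be a field and R a commutative k-algebra which is an integral domain of finite type over k with more than one maximal ideal. Then the R⊗_k R-module Hom_{R⊗_k R}(D, R ⊗_k R) is zero, where D is R with the S = R⊗_k R action (r⊗r')•x = rr'x. -/

import Mathlib

/-!
A homomorphism `g : D → R ⊗[k] R` sends each `x` to an element `z` with
`(a ⊗ 1) * z = (1 ⊗ a) * z` for all `a`. Contracting the right factor against a functional `l`
turns this into `w * a = (contraction of z against l ∘ (a * ·))`, where `w` is the contraction of
`z` against `l`. All contractions of `z` lie in one finite-dimensional subspace, so if `w ≠ 0`,
multiplication by `w` embeds the domain `R` into it. But `R` is infinite-dimensional over `k`: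
a finite-dimensional domain is a field, and a field has only one maximal ideal.
-/

open TensorProduct

namespace TensorProduct

variable {k : Type*} [Field k]

section Contraction

variable {M N : Type*} [AddCommGroup M] [Module k M] [AddCommGroup N] [Module k N]

noncomputable def rightContract (l : Module.Dual k N) : M ⊗[k] N →ₗ[k] M :=
  (TensorProduct.rid k M).toLinearMap ∘ₗ l.lTensor M

@[simp]
lemma rightContract_tmul (l : Module.Dual k N) (m : M) (n : N) :
    rightContract l (m ⊗ₜ[k] n) = l n • m := by
  simp [rightContract]

lemma eq_zero_of_forall_rightContract_eq_zero (z : M ⊗[k] N)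
    (h : ∀ l : Module.Dual k N, rightContract l z = 0) : z = 0 := by
  classical
  let b := Module.Basis.ofVectorSpace k N
  let e := (b.repr.lTensor M).trans (finsuppScalarRight k k M _)
  have he (i) : Finsupp.lapply i ∘ₗ e.toLinearMap = rightContract (b.coord i) :=
    TensorProduct.ext' fun m n => by simp [e, finsuppScalarRight_apply_tmul_apply]
  apply e.injective
  ext i
  simpa [h] using LinearMap.congr_fun (he i) z

lemma exists_finiteDimensional_forall_rightContract_mem (z : M ⊗[k] N) :
    ∃ X : Submodule k M, FiniteDimensional k X ∧ ∀ l : Module.Dual k N, rightContract l z ∈ X := by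
  induction z using TensorProduct.induction_on with
  | zero => exact ⟨⊥, inferInstance, fun l => by simp⟩
  | tmul m n =>
    exact ⟨k ∙ m, inferInstance, fun l => by
      simpa using Submodule.smul_mem _ (l n) (Submodule.mem_span_singleton_self m)⟩
  | add x y hx hy =>
    obtain ⟨X, _, hX⟩ := hx
    obtain ⟨Y, _, hY⟩ := hy
    exact ⟨X ⊔ Y, inferInstance, fun l => by
      simpa using Submodule.add_mem_sup (hX l) (hY l)⟩

end Contraction

section Algebra

variable {A B : Type*} [CommRing A] [Algebra k A] [CommRing B] [Algebra k B]

lemma rightContract_tmul_one_mul (l : Module.Dual k B) (a : A) (z : A ⊗[k] B) :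
    rightContract l ((a ⊗ₜ[k] (1 : B)) * z) = a * rightContract l z := by
  induction z using TensorProduct.induction_on with
  | zero => simp
  | tmul x y => simp
  | add x y hx hy => simp [mul_add, hx, hy]

lemma rightContract_one_tmul_mul (l : Module.Dual k B) (b : B) (z : A ⊗[k] B) :
    rightContract l (((1 : A) ⊗ₜ[k] b) * z) = rightContract (l ∘ₗ LinearMap.mulLeft k b) z := by
  induction z using TensorProduct.induction_on with
  | zero => simp
  | tmul x y => simp
  | add x y hx hy => rw [mul_add, map_add, hx, hy, map_add]

end Algebra

lemma eq_zero_of_forall_tmul_one_mul_eq_one_tmul_mul {R : Type*} [CommRing R] [IsDomain R]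
    [Algebra k R] (hR : ¬ FiniteDimensional k R) (z : R ⊗[k] R)
    (hz : ∀ a : R, (a ⊗ₜ[k] (1 : R)) * z = ((1 : R) ⊗ₜ[k] a) * z) : z = 0 := by
  refine eq_zero_of_forall_rightContract_eq_zero z fun l => by_contra fun hw => hR ?_
  obtain ⟨X, _, hX⟩ := exists_finiteDimensional_forall_rightContract_mem z
  have hmem (a : R) : rightContract l z * a ∈ X := by
    rw [mul_comm, ← rightContract_tmul_one_mul, hz, rightContract_one_tmul_mul]
    exact hX _
  exact .of_injective ((LinearMap.mulLeft k _).codRestrict X hmem)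
    fun a b hab => mul_left_cancel₀ hw (congrArg Subtype.val hab)

end TensorProduct

lemma not_finiteDimensional_of_isMaximal_ne {k R : Type*} [Field k] [CommRing R] [IsDomain R]
    [Algebra k R] {m n : Ideal R} (hm : m.IsMaximal) (hn : n.IsMaximal) (hmn : m ≠ n) :
    ¬ FiniteDimensional k R := by
  intro
  have := IsArtinianRing.of_finite k R
  let := (IsArtinianRing.isField_of_isDomain R).toField
  exact hmn (m.eq_bot_of_prime.trans n.eq_bot_of_prime.symm)

theorem stmt15_general (k : Type*) [Field k] (R : Type*) [CommRing R] [Algebra k R]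
    [IsDomain R]
    (m n : Ideal R) (hm : m.IsMaximal) (hn : n.IsMaximal) (hmn : m ≠ n) :
    letI : Module (R ⊗[k] R) R :=
      Module.compHom R (Algebra.TensorProduct.lmul' k (S := R)).toRingHom
    ∀ g : R →ₗ[R ⊗[k] R] (R ⊗[k] R), g = 0 := by
  let : Module (R ⊗[k] R) R :=
    Module.compHom R (Algebra.TensorProduct.lmul' k (S := R)).toRingHom
  intro g
  ext x
  refine TensorProduct.eq_zero_of_forall_tmul_one_mul_eq_one_tmul_mul
    (not_finiteDimensional_of_isMaximal_ne hm hn hmn) (g x) fun a => ?_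
  have hD : (a ⊗ₜ[k] (1 : R)) • x = ((1 : R) ⊗ₜ[k] a) • x := by
    change Algebra.TensorProduct.lmul' k _ * x = Algebra.TensorProduct.lmul' k _ * x
    simp
  rw [← smul_eq_mul, ← map_smul, hD, map_smul, smul_eq_mul]

/-- If `R` is an integral domain of finite type over a field `k` with more than
one maximal ideal, then `Hom_{R⊗R}(D, R⊗R) = 0`, where `D` is `R` with the
`(r ⊗ r') • x = r * r' * x` action of `S = R ⊗_k R`. -/
theorem stmt15 (k : Type*) [Field k] (R : Type*) [CommRing R] [Algebra k R]
    [IsDomain R] [Algebra.FiniteType k R]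
    (m n : Ideal R) (hm : m.IsMaximal) (hn : n.IsMaximal) (hmn : m ≠ n) :
    letI : Module (R ⊗[k] R) R :=
      Module.compHom R (Algebra.TensorProduct.lmul' k (S := R)).toRingHom
    ∀ g : R →ₗ[R ⊗[k] R] (R ⊗[k] R), g = 0 :=
  stmt15_general k R m n hm hn hmn
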